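/- arXiv:2411.07761 — 4 statements merged into one kernel-verified Lean document; each statement's English description precedes it below -/
import Mathlib

section
/- Let f belong to the class S with Taylor coefficients a_n = f⁽ⁿ⁾(0)/n!, and let g be analytic and injective on the open unit disc 𝔻 with g(0) = 0, g'(0) = 1, g odd (g(−z) = −g(z) for z ∈ 𝔻), and g(z)² = f(z²) for all z ∈ 𝔻; write c_{2k−1} = g⁽²ᵏ⁻¹⁾(0)/(2k−1)! for the odd Taylor coefficients of g (so c₁ = 1). Then for every n ≥ 1, |a_n| ≤ Σ_{k=1}^{n} |c_{2k−1}|². In particular, if the Robertson bound Σ_{k=1}^{n} |c_{2k−1}|² ≤ n holds, then |a_n| ≤ n. -/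
/-!
Comparing the coefficients of `z ^ (2n)` in `g z ^ 2 = f (z ^ 2)` expresses `a n` as the
Cauchy-product coefficient `∑_{i + j = 2n} c i * c j`. As `g` is odd, only odd `i, j`
contribute, and `‖c i * c j‖ ≤ (‖c i‖ ^ 2 + ‖c j‖ ^ 2) / 2` summed over the symmetric index set
bounds this by `∑_{k = 1}^n ‖c (2k - 1)‖ ^ 2`.
-/

open Metric Finset Filter Topology FormalMultilinearSeries

theorem HasSum.sq_of_summable_norm_mul_pow {R : Type*} [NormedCommRing R] {a : ℕ → R} {z s : R}
    (hs : HasSum (fun n => a n * z ^ n) s) (habs : Summable fun n => ‖a n * z ^ n‖) :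
    HasSum (fun n => (∑ ij ∈ antidiagonal n, a ij.1 * a ij.2) * z ^ n) (s ^ 2) := by
  have hterm (n : ℕ) : ∑ ij ∈ antidiagonal n, a ij.1 * z ^ ij.1 * (a ij.2 * z ^ ij.2) =
      (∑ ij ∈ antidiagonal n, a ij.1 * a ij.2) * z ^ n := by
    rw [sum_mul]
    refine sum_congr rfl fun ij hij => ?_
    rw [← mem_antidiagonal.mp hij, pow_add]
    ring
  rw [sq, ← hs.tsum_eq,
    tsum_mul_tsum_eq_tsum_sum_antidiagonal_of_summable_norm' habs hs.summable habs hs.summable]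
  simpa only [hterm] using
    (summable_sum_mul_antidiagonal_of_summable_norm' habs hs.summable habs hs.summable).hasSum

theorem HasSum.ite_even_mul_pow_of_sq {R : Type*} [Semiring R] [TopologicalSpace R]
    {a : ℕ → R} {z s : R}
    (hs : HasSum (fun n => a n * (z ^ 2) ^ n) s) :
    HasSum (fun m => (if Even m then a (m / 2) else 0) * z ^ m) s := by
  have hodd (m : ℕ) (hm : m ∉ Set.range (2 * ·)) :
      (if Even m then a (m / 2) else 0) * z ^ m = 0 := by
    rw [if_neg fun ⟨k, hk⟩ => hm ⟨k, by simp only; omega⟩, zero_mul]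
  refine ((mul_right_injective₀ two_ne_zero).hasSum_iff hodd).mp ?_
  refine hs.congr_fun fun k => ?_
  simp [← pow_mul]

theorem sum_antidiagonal_two_mul_add_two_eq_of_even_eq_zero {R : Type*}
    [NonUnitalNonAssocSemiring R] {c : ℕ → R} (hc : ∀ m, Even m → c m = 0) (n : ℕ) :
    ∑ ij ∈ antidiagonal (2 * n + 2), c ij.1 * c ij.2 =
      ∑ ij ∈ antidiagonal n, c (2 * ij.1 + 1) * c (2 * ij.2 + 1) := by
  symm
  rw [← sum_image (g := fun ij : ℕ × ℕ => (2 * ij.1 + 1, 2 * ij.2 + 1))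
    (f := fun ij => c ij.1 * c ij.2) fun x _ y _ h => by
      simp only [Prod.mk.injEq] at h
      ext <;> omega]
  refine sum_subset ?_ ?_
  · intro x hx
    obtain ⟨ij, hij, rfl⟩ := mem_image.mp hx
    rw [HasAntidiagonal.mem_antidiagonal] at hij ⊢
    omega
  · rintro ⟨i, j⟩ hij hnot
    replace hij : i + j = 2 * n + 2 := HasAntidiagonal.mem_antidiagonal.mp hij
    rcases Nat.even_or_odd i with hi | ⟨k, rfl⟩
    · rw [hc i hi, zero_mul]
    · exfalso
      refine hnot (mem_image.mpr ⟨(k, n - k), ?_, ?_⟩)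
      · rw [HasAntidiagonal.mem_antidiagonal]
        omega
      · simp only [Prod.mk.injEq, true_and]
        omega

theorem sum_Icc_one_comp_two_mul_sub_one {M : Type*} [AddCommMonoid M] (u : ℕ → M) (n : ℕ) :
    ∑ k ∈ Icc 1 n, u (2 * k - 1) = ∑ i ∈ range n, u (2 * i + 1) := by
  rw [range_eq_Ico, ← Ico_succ_right_eq_Icc, Order.succ_eq_add_one, ← zero_add 1, ← sum_Ico_add',
    zero_add]
  simp [mul_add]

theorem norm_sum_antidiagonal_mul_le {R : Type*} [SeminormedRing R] (x : ℕ → R) (n : ℕ) :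
    ‖∑ ij ∈ antidiagonal n, x ij.1 * x ij.2‖ ≤ ∑ i ∈ range (n + 1), ‖x i‖ ^ 2 := by
  have hswap : ∑ ij ∈ antidiagonal n, ‖x ij.2‖ ^ 2 = ∑ ij ∈ antidiagonal n, ‖x ij.1‖ ^ 2 :=
    Nat.sum_antidiagonal_swap (f := fun ij => ‖x ij.1‖ ^ 2)
  calc ‖∑ ij ∈ antidiagonal n, x ij.1 * x ij.2‖
      ≤ ∑ ij ∈ antidiagonal n, (‖x ij.1‖ ^ 2 + ‖x ij.2‖ ^ 2) / 2 := by
        refine (norm_sum_le _ _).trans (sum_le_sum fun ij _ => ?_)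
        nlinarith [norm_mul_le (x ij.1) (x ij.2), sq_nonneg (‖x ij.1‖ - ‖x ij.2‖)]
    _ = ∑ ij ∈ antidiagonal n, ‖x ij.1‖ ^ 2 := by
        rw [← sum_div, sum_add_distrib, hswap]
        ring
    _ = ∑ i ∈ range (n + 1), ‖x i‖ ^ 2 := Nat.sum_antidiagonal_eq_sum_range_succ_mk _ n

section TaylorCoeff

variable {𝕜 : Type*} [NontriviallyNormedField 𝕜]

noncomputable def taylorCoeff (f : 𝕜 → 𝕜) (n : ℕ) : 𝕜 := iteratedDeriv n f 0 / n.factorial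

theorem eq_of_eventually_hasSum_mul_pow {a b : ℕ → 𝕜} {F : 𝕜 → 𝕜}
    (ha : ∀ᶠ z in 𝓝 0, HasSum (fun n => a n * z ^ n) (F z))
    (hb : ∀ᶠ z in 𝓝 0, HasSum (fun n => b n * z ^ n) (F z)) : a = b := by
  have hasFPowerSeriesAt_ofScalars (c : ℕ → 𝕜)
      (hc : ∀ᶠ z in 𝓝 0, HasSum (fun n => c n * z ^ n) (F z)) :
      HasFPowerSeriesAt F (ofScalars 𝕜 c) 0 := by
    rw [hasFPowerSeriesAt_iff]
    filter_upwards [hc] with z hz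
    simpa only [coeff_ofScalars, smul_eq_mul, zero_add, mul_comm] using hz
  exact ofScalars_series_injective 𝕜 𝕜 <|
    (hasFPowerSeriesAt_ofScalars a ha).eq_formalMultilinearSeries (hasFPowerSeriesAt_ofScalars b hb)

theorem AnalyticAt.eventually_hasSum_taylorCoeff_mul_pow [CompleteSpace 𝕜] [CharZero 𝕜]
    {f : 𝕜 → 𝕜} (hf : AnalyticAt 𝕜 f 0) :
    ∀ᶠ z in 𝓝 0, HasSum (fun n => taylorCoeff f n * z ^ n) (f z) ∧
      Summable fun n => ‖taylorCoeff f n * z ^ n‖ := by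
  obtain ⟨r, hr⟩ : HasFPowerSeriesAt f (ofScalars 𝕜 (taylorCoeff f)) 0 := hf.hasFPowerSeriesAt
  have hterm (z : 𝕜) (n : ℕ) :
      ofScalars 𝕜 (taylorCoeff f) n (fun _ => z) = taylorCoeff f n * z ^ n := by
    rw [apply_eq_pow_smul_coeff, coeff_ofScalars, smul_eq_mul, mul_comm]
  filter_upwards [eball_mem_nhds 0 hr.r_pos] with z hz
  refine ⟨by simpa only [hterm, zero_add] using hr.hasSum hz, ?_⟩
  simpa only [hterm] using summable_norm_apply _ (eball_subset_eball hr.r_le hz)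

theorem taylorCoeff_eq_zero_of_even [CharZero 𝕜] {g : 𝕜 → 𝕜}
    (hodd : ∀ᶠ z in 𝓝 0, g (-z) = -g z) {m : ℕ} (hm : Even m) : taylorCoeff g m = 0 := by
  have h := Filter.EventuallyEq.iteratedDeriv_eq m hodd
  rw [iteratedDeriv_comp_neg, iteratedDeriv_fun_neg, neg_zero, hm.neg_one_pow, one_smul,
    eq_neg_iff_add_eq_zero, ← two_mul, mul_eq_zero] at h
  rw [taylorCoeff, h.resolve_left two_ne_zero, zero_div]

theorem sum_antidiagonal_taylorCoeff_mul_eq [CompleteSpace 𝕜] [CharZero 𝕜]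
    {f g : 𝕜 → 𝕜} (hf : AnalyticAt 𝕜 f 0) (hg : AnalyticAt 𝕜 g 0)
    (hsq : ∀ᶠ z in 𝓝 0, g z ^ 2 = f (z ^ 2)) (m : ℕ) :
    ∑ ij ∈ antidiagonal m, taylorCoeff g ij.1 * taylorCoeff g ij.2 =
      if Even m then taylorCoeff f (m / 2) else 0 := by
  have hsq_tendsto : Tendsto (fun z : 𝕜 => z ^ 2) (𝓝 0) (𝓝 0) := by
    simpa using (continuous_pow 2).tendsto (0 : 𝕜)
  suffices (fun m => ∑ ij ∈ antidiagonal m, taylorCoeff g ij.1 * taylorCoeff g ij.2) =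
      fun m => if Even m then taylorCoeff f (m / 2) else 0 from congrFun this m
  refine eq_of_eventually_hasSum_mul_pow (F := fun z => g z ^ 2) ?_ ?_
  · filter_upwards [hg.eventually_hasSum_taylorCoeff_mul_pow] with z hz
    exact hz.1.sq_of_summable_norm_mul_pow hz.2
  · filter_upwards [hsq, hsq_tendsto.eventually hf.eventually_hasSum_taylorCoeff_mul_pow]
      with z hz hfz
    rw [hz]
    exact hfz.1.ite_even_mul_pow_of_sq

end TaylorCoeff

theorem robertson_implies_bieberbach_general (f g : ℂ → ℂ)
    (hf : DifferentiableOn ℂ f (ball (0 : ℂ) 1))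
    (hg : DifferentiableOn ℂ g (ball (0 : ℂ) 1))
    (hodd : ∀ z ∈ ball (0 : ℂ) 1, g (-z) = -g z)
    (hsq : ∀ z ∈ ball (0 : ℂ) 1, (g z) ^ 2 = f (z ^ 2))
    (a c : ℕ → ℂ)
    (ha : ∀ n, a n = iteratedDeriv n f 0 / (n.factorial : ℂ))
    (hc : ∀ m, c m = iteratedDeriv m g 0 / (m.factorial : ℂ)) :
    ∀ n : ℕ, 1 ≤ n →
      ‖a n‖ ≤ ∑ k ∈ Finset.Icc 1 n, ‖c (2 * k - 1)‖ ^ 2 ∧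
      ((∑ k ∈ Finset.Icc 1 n, ‖c (2 * k - 1)‖ ^ 2 ≤ (n : ℝ)) → ‖a n‖ ≤ (n : ℝ)) := by
  obtain rfl : a = taylorCoeff f := funext ha
  obtain rfl : c = taylorCoeff g := funext hc
  have hball : ball (0 : ℂ) 1 ∈ 𝓝 0 := ball_mem_nhds 0 one_pos
  have hodd_coeff (m : ℕ) (hm : Even m) : taylorCoeff g m = 0 :=
    taylorCoeff_eq_zero_of_even (eventually_of_mem hball hodd) hm
  have hcoeff (n : ℕ) : taylorCoeff f (n + 1) =
      ∑ ij ∈ antidiagonal n, taylorCoeff g (2 * ij.1 + 1) * taylorCoeff g (2 * ij.2 + 1) := by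
    rw [← sum_antidiagonal_two_mul_add_two_eq_of_even_eq_zero hodd_coeff,
      sum_antidiagonal_taylorCoeff_mul_eq (hf.analyticAt hball) (hg.analyticAt hball)
        (eventually_of_mem hball hsq), if_pos ⟨n + 1, by ring⟩]
    congr 1
    omega
  rintro n hn
  obtain ⟨n, rfl⟩ := Nat.exists_eq_add_of_le' hn
  have hbound : ‖taylorCoeff f (n + 1)‖ ≤ ∑ k ∈ Icc 1 (n + 1), ‖taylorCoeff g (2 * k - 1)‖ ^ 2 := by
    rw [hcoeff, sum_Icc_one_comp_two_mul_sub_one (fun k => ‖taylorCoeff g k‖ ^ 2)]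
    exact norm_sum_antidiagonal_mul_le (fun i => taylorCoeff g (2 * i + 1)) n
  exact ⟨hbound, hbound.trans⟩

/-- **Robertson's conjecture implies Bieberbach's conjecture.** If `g` is the odd square-root
transform of `f ∈ S`, with odd coefficients `c (2k-1)`, then `|a n| ≤ ∑_{k=1}^n |c (2k-1)|²`;
in particular the Robertson bound `∑_{k=1}^n |c (2k-1)|² ≤ n` implies `|a n| ≤ n`. -/
theorem robertson_implies_bieberbach (f g : ℂ → ℂ)
    (hf : DifferentiableOn ℂ f (ball (0 : ℂ) 1))
    (hfinj : Set.InjOn f (ball (0 : ℂ) 1))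
    (hf0 : f 0 = 0) (hf1 : deriv f 0 = 1)
    (hg : DifferentiableOn ℂ g (ball (0 : ℂ) 1))
    (hginj : Set.InjOn g (ball (0 : ℂ) 1))
    (hg0 : g 0 = 0) (hg1 : deriv g 0 = 1)
    (hodd : ∀ z ∈ ball (0 : ℂ) 1, g (-z) = -g z)
    (hsq : ∀ z ∈ ball (0 : ℂ) 1, (g z) ^ 2 = f (z ^ 2))
    (a c : ℕ → ℂ)
    (ha : ∀ n, a n = iteratedDeriv n f 0 / (n.factorial : ℂ))
    (hc : ∀ m, c m = iteratedDeriv m g 0 / (m.factorial : ℂ)) :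
    ∀ n : ℕ, 1 ≤ n →
      ‖a n‖ ≤ ∑ k ∈ Finset.Icc 1 n, ‖c (2 * k - 1)‖ ^ 2 ∧
      ((∑ k ∈ Finset.Icc 1 n, ‖c (2 * k - 1)‖ ^ 2 ≤ (n : ℝ)) → ‖a n‖ ≤ (n : ℝ)) :=
  robertson_implies_bieberbach_general f g hf hg hodd hsq a c ha hc
end

section
/- Let α : ℕ → ℂ (indexed from 1) and define β : ℕ → ℂ recursively by β₀ = 1 and n·β_n = Σ_{k=0}^{n−1} (n−k)·α_{n−k}·β_k for n ≥ 1 (these are the Taylor coefficients of ψ = exp(φ) when φ(z) = Σ_{k≥1} α_k z^k and ψ(z) = Σ_{k≥0} β_k z^k). Then for every n ≥ 1, Σ_{k=0}^{n} |β_k|² ≤ (n+1)·exp( (1/(n+1)) · Σ_{m=1}^{n} Σ_{k=1}^{m} ( k·|α_k|² − 1/k ) ). -/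
/-!
Write `A_n = ∑_{j ≤ n} j² |α_j|²` and `S_n = ∑_{k ≤ n} |β_k|²`. Cauchy–Schwarz applied to the
recursion gives `n² |β_n|² ≤ A_n S_{n-1}`, hence `S_n ≤ (1 + A_n / n²) S_{n-1}`. Bounding the factor
`(1 + A_n/n²) = ((n+1)/n) x` with `x = (n² + A_n)/(n(n+1)) ≤ exp (x - 1)` gives inductively
`S_n ≤ (n+1) exp (∑_{m ≤ n} (A_m - m)/(m(m+1)))`, and Abel summation identifies this exponent
with the one in the theorem.
-/

open Finset

lemma sum_range_apply_sub_eq_sum_Icc {M : Type*} [AddCommMonoid M] (g : ℕ → M) (n : ℕ) :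
    ∑ k ∈ range n, g (n - k) = ∑ j ∈ Icc 1 n, g j := by
  rw [← Ico_add_one_right_eq_Icc, sum_Ico_eq_sum_range, ← sum_range_reflect]
  refine sum_congr rfl fun k hk => congrArg g ?_
  have := mem_range.mp hk
  omega

lemma sq_mul_norm_sq_le_of_mul_eq_sum {𝕜 : Type*} [RCLike 𝕜] (α β : ℕ → 𝕜) (n : ℕ)
    (h : (n : 𝕜) * β n = ∑ k ∈ range n, ((n - k : ℕ) : 𝕜) * α (n - k) * β k) :
    (n : ℝ) ^ 2 * ‖β n‖ ^ 2 ≤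
      (∑ j ∈ Icc 1 n, (j : ℝ) ^ 2 * ‖α j‖ ^ 2) * ∑ k ∈ range n, ‖β k‖ ^ 2 := by
  set a : ℕ → ℝ := fun k => ‖((n - k : ℕ) : 𝕜) * α (n - k)‖
  have htriangle : (n : ℝ) * ‖β n‖ ≤ ∑ k ∈ range n, a k * ‖β k‖ := by
    calc (n : ℝ) * ‖β n‖ = ‖(n : 𝕜) * β n‖ := by rw [norm_mul, RCLike.norm_natCast]
      _ ≤ ∑ k ∈ range n, ‖((n - k : ℕ) : 𝕜) * α (n - k) * β k‖ := h ▸ norm_sum_le _ _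
      _ = ∑ k ∈ range n, a k * ‖β k‖ := by simp only [a, norm_mul]
  have ha : ∑ k ∈ range n, a k ^ 2 = ∑ j ∈ Icc 1 n, (j : ℝ) ^ 2 * ‖α j‖ ^ 2 := by
    rw [← sum_range_apply_sub_eq_sum_Icc (fun j => (j : ℝ) ^ 2 * ‖α j‖ ^ 2)]
    simp only [a, norm_mul, RCLike.norm_natCast, mul_pow]
  calc (n : ℝ) ^ 2 * ‖β n‖ ^ 2 = ((n : ℝ) * ‖β n‖) ^ 2 := by ring
    _ ≤ (∑ k ∈ range n, a k * ‖β k‖) ^ 2 := pow_le_pow_left₀ (by positivity) htriangle 2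
    _ ≤ _ := ha ▸ sum_mul_sq_le_sq_mul_sq _ _ _

lemma add_le_mul_exp_of_sq_mul_le {N A S b E : ℝ} (hN : 0 < N) (hA : 0 ≤ A)
    (hS : S ≤ N * Real.exp E) (hb : N ^ 2 * b ≤ A * S) :
    S + b ≤ (N + 1) * Real.exp (E + (A - N) / (N * (N + 1))) := by
  set x := (N ^ 2 + A) / (N * (N + 1))
  have hx : x ≤ Real.exp (x - 1) := by linarith [Real.add_one_le_exp (x - 1)]
  have hx₁ : x - 1 = (A - N) / (N * (N + 1)) := by simp only [x]; field_simp; ring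
  have hb' : b ≤ A * S / N ^ 2 := by rw [le_div_iff₀ (by positivity)]; linarith
  calc S + b ≤ S + A * S / N ^ 2 := by linarith
    _ = S * (1 + A / N ^ 2) := by ring
    _ ≤ N * Real.exp E * (1 + A / N ^ 2) := by gcongr
    _ = (N + 1) * (Real.exp E * x) := by simp only [x]; field_simp
    _ ≤ (N + 1) * (Real.exp E * Real.exp (x - 1)) := by gcongr
    _ = (N + 1) * Real.exp (E + (A - N) / (N * (N + 1))) := by rw [← Real.exp_add, hx₁]

noncomputable def milinExponent (a : ℕ → ℝ) (n : ℕ) : ℝ :=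
  ∑ m ∈ Icc 1 n, ((∑ j ∈ Icc 1 m, (j : ℝ) ^ 2 * a j) - m) / (m * (m + 1))

lemma milinExponent_succ (a : ℕ → ℝ) (n : ℕ) :
    milinExponent a (n + 1) = milinExponent a n +
      ((∑ j ∈ Icc 1 (n + 1), (j : ℝ) ^ 2 * a j) - (n + 1)) / ((n + 1) * (n + 1 + 1)) := by
  rw [milinExponent, sum_Icc_succ_top (Nat.le_add_left 1 n)]
  push_cast
  rfl

lemma sum_range_norm_sq_le_mul_exp_milinExponent {𝕜 : Type*} [RCLike 𝕜] (α β : ℕ → 𝕜)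
    (hβ0 : β 0 = 1)
    (hrec : ∀ n : ℕ, 1 ≤ n → (n : 𝕜) * β n =
      ∑ k ∈ range n, ((n - k : ℕ) : 𝕜) * α (n - k) * β k) (n : ℕ) :
    ∑ k ∈ range (n + 1), ‖β k‖ ^ 2 ≤ (n + 1) * Real.exp (milinExponent (‖α ·‖ ^ 2) n) := by
  induction n with
  | zero => simp [hβ0, milinExponent]
  | succ n ih =>
    have hcs := sq_mul_norm_sq_le_of_mul_eq_sum α β (n + 1) (hrec (n + 1) n.succ_pos)
    rw [sum_range_succ, milinExponent_succ]
    push_cast at hcs ⊢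
    exact add_le_mul_exp_of_sq_mul_le (by positivity) (by positivity) ih hcs

lemma sum_Icc_sum_Icc_eq_sum_Icc_mul (u : ℕ → ℝ) (n : ℕ) :
    ∑ m ∈ Icc 1 n, ∑ k ∈ Icc 1 m, u k = ∑ k ∈ Icc 1 n, ((n : ℝ) + 1 - k) * u k := by
  induction n with
  | zero => simp
  | succ n ih =>
    have h : 1 ≤ n + 1 := Nat.le_add_left 1 n
    rw [sum_Icc_succ_top h, ih, sum_Icc_succ_top h, sum_Icc_succ_top h, ← add_assoc,
      ← sum_add_distrib]
    push_cast
    congr 1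
    · exact sum_congr rfl fun k _ => by ring
    · ring

lemma sum_Icc_sum_Icc_div_mul_succ (t : ℕ → ℝ) (n : ℕ) :
    ∑ m ∈ Icc 1 n, (∑ k ∈ Icc 1 m, t k) / (m * (m + 1))
      = ∑ k ∈ Icc 1 n, t k * (1 / k - 1 / ((n : ℝ) + 1)) := by
  induction n with
  | zero => simp
  | succ n ih =>
    have h : 1 ≤ n + 1 := Nat.le_add_left 1 n
    rw [sum_Icc_succ_top h, ih, sum_Icc_succ_top h, sum_Icc_succ_top h, add_div, sum_div,
      ← add_assoc, ← sum_add_distrib]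
    push_cast
    congr 1
    · refine sum_congr rfl fun k hk => ?_
      have : (k : ℝ) ≠ 0 := by have := (mem_Icc.mp hk).1; positivity
      field_simp
      ring
    · field_simp
      ring

lemma milinExponent_eq (a : ℕ → ℝ) (n : ℕ) :
    milinExponent a n =
      1 / ((n : ℝ) + 1) * ∑ m ∈ Icc 1 n, ∑ k ∈ Icc 1 m, ((k : ℝ) * a k - 1 / k) := by
  have hA : ∀ m : ℕ, (∑ j ∈ Icc 1 m, (j : ℝ) ^ 2 * a j) - m = ∑ k ∈ Icc 1 m, ((k : ℝ) ^ 2 * a k - 1) :=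
    fun m => by simp [sum_sub_distrib]
  simp only [milinExponent, hA, sum_Icc_sum_Icc_div_mul_succ, sum_Icc_sum_Icc_eq_sum_Icc_mul,
    mul_sum]
  refine sum_congr rfl fun k hk => ?_
  have : (k : ℝ) ≠ 0 := by have := (mem_Icc.mp hk).1; positivity
  field_simp

/-- **The Lebedev–Milin inequality.** If `β₀ = 1` and `n βₙ = ∑_{k<n} (n-k) α_{n-k} β_k`
(the coefficient recursion for `ψ = exp φ`), then for every `n ≥ 1`,
`∑_{k=0}^n |β_k|² ≤ (n+1) exp( (1/(n+1)) ∑_{m=1}^n ∑_{k=1}^m (k|α_k|² - 1/k) )`. -/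
theorem lebedev_milin_inequality (α β : ℕ → ℂ)
    (hβ0 : β 0 = 1)
    (hrec : ∀ n : ℕ, 1 ≤ n → (n : ℂ) * β n =
      ∑ k ∈ Finset.range n, ((n - k : ℕ) : ℂ) * α (n - k) * β k) :
    ∀ n : ℕ, 1 ≤ n →
      ∑ k ∈ Finset.range (n + 1), ‖β k‖ ^ 2 ≤
        ((n : ℝ) + 1) * Real.exp ((1 / ((n : ℝ) + 1)) *
          ∑ m ∈ Finset.Icc 1 n, ∑ k ∈ Finset.Icc 1 m,
            ((k : ℝ) * ‖α k‖ ^ 2 - 1 / (k : ℝ))) := by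
  intro n _
  rw [← milinExponent_eq (‖α ·‖ ^ 2)]
  exact sum_range_norm_sq_le_mul_exp_milinExponent α β hβ0 hrec n
end

section
/- Let 0 ≤ s ≤ t be real numbers and let φ be analytic on the open unit disc 𝔻 with φ(0) = 0, |φ(z)| ≤ |z| for all z ∈ 𝔻, and φ'(0) = e^{s−t}. Then for every z ∈ 𝔻, |z − φ(z)| ≤ 2|z| · (1+|z|)/(1−|z|) · (1 − e^{s−t}). -/
open Metric Set ComplexConjugate

/-! The quotient `h(z) = φ(z)/z` is a holomorphic self-map of the closed unit disc with
`h(0) = a := e^{s-t}`. The Schwarz–Pick inequality at the origin gives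
`|h(z) - a| ≤ |z| |1 - a h(z)|`, and two triangle inequalities turn this into
`|1 - h(z)| ≤ (1+|z|)/(1-|z|) (1 - a)`; finally `z - φ(z) = z (1 - h(z))`. -/

/-- The disc automorphism `w ↦ (w - c) / (1 - c̄ w)` maps the closed unit disc into itself. -/
theorem norm_sub_le_norm_one_sub_conj_mul {c w : ℂ} (hc : ‖c‖ ≤ 1) (hw : ‖w‖ ≤ 1) :
    ‖w - c‖ ≤ ‖1 - conj c * w‖ := by
  have key : ‖1 - conj c * w‖ ^ 2 - ‖w - c‖ ^ 2 = (1 - ‖c‖ ^ 2) * (1 - ‖w‖ ^ 2) := by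
    simp only [← Complex.normSq_eq_norm_sq, Complex.normSq_sub, map_mul, Complex.normSq_conj,
      map_one, one_mul, Complex.conj_conj, Complex.mul_re, Complex.conj_re, Complex.conj_im]
    ring
  have hprod : 0 ≤ (1 - ‖c‖ ^ 2) * (1 - ‖w‖ ^ 2) := by
    apply mul_nonneg <;> nlinarith [norm_nonneg c, norm_nonneg w]
  exact (sq_le_sq₀ (norm_nonneg _) (norm_nonneg _)).mp (by linarith)

/-- Schwarz–Pick inequality at the origin. -/
theorem norm_sub_apply_zero_le_of_mapsTo_ball {f : ℂ → ℂ} (hd : DifferentiableOn ℂ f (ball 0 1))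
    (hf : MapsTo f (ball 0 1) (closedBall 0 1)) {z : ℂ} (hz : z ∈ ball 0 1) :
    ‖f z - f 0‖ ≤ ‖z‖ * ‖1 - conj (f 0) * f z‖ := by
  have h0 : (0 : ℂ) ∈ ball 0 1 := mem_ball_self one_pos
  rcases (mem_closedBall_zero_iff.mp (hf h0)).eq_or_lt with hc | hc
  · have hmax : IsMaxOn (norm ∘ f) (ball 0 1) 0 := fun w hw => by
      simpa [hc] using hf hw
    have hfz : f z = f 0 :=
      Complex.eqOn_of_isPreconnected_of_isMaxOn_norm (convex_ball 0 1).isPreconnected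
        isOpen_ball hd h0 hmax hz
    rw [hfz, sub_self, norm_zero]
    positivity
  · set c := f 0
    have hden : ∀ w ∈ ball (0 : ℂ) 1, 0 < ‖1 - conj c * f w‖ := fun w hw => by
      have : ‖conj c * f w‖ < 1 := by
        rw [norm_mul, Complex.norm_conj]
        nlinarith [mem_closedBall_zero_iff.mp (hf hw), norm_nonneg c, norm_nonneg (f w)]
      have := norm_sub_norm_le (1 : ℂ) (conj c * f w)
      rw [norm_one] at this
      linarith
    set g : ℂ → ℂ := fun w => (f w - c) / (1 - conj c * f w)
    have hgd : DifferentiableOn ℂ g (ball 0 1) :=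
      (hd.sub_const c).div ((differentiableOn_const 1).sub ((differentiableOn_const _).mul hd))
        fun w hw => norm_pos_iff.mp (hden w hw)
    have hg : MapsTo g (ball 0 1) (closedBall 0 1) := fun w hw => by
      rw [mem_closedBall_zero_iff, norm_div, div_le_one (hden w hw)]
      exact norm_sub_le_norm_one_sub_conj_mul hc.le (mem_closedBall_zero_iff.mp (hf hw))
    have hgz := Complex.norm_le_norm_of_mapsTo_ball hgd hg (by simp [g, c])
      (mem_ball_zero_iff.mp hz)
    rwa [norm_div, div_le_iff₀ (hden z hz)] at hgz

theorem norm_one_sub_le_of_norm_sub_le {w : ℂ} {a r : ℝ} (hw : ‖w‖ ≤ 1) (ha : a ≤ 1)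
    (hr₀ : 0 ≤ r) (hr₁ : r < 1) (h : ‖w - a‖ ≤ r * ‖1 - a * w‖) :
    ‖1 - w‖ ≤ (1 + r) / (1 - r) * (1 - a) := by
  have h1a : ‖(1 : ℂ) - a‖ = 1 - a := by
    rw [← Complex.ofReal_one, ← Complex.ofReal_sub, Complex.norm_real,
      Real.norm_of_nonneg (sub_nonneg.mpr ha)]
  have hden : ‖1 - a * w‖ ≤ ‖1 - w‖ + (1 - a) :=
    calc ‖1 - a * w‖ = ‖(1 - w) + (1 - a) * w‖ := by ring_nf
      _ ≤ ‖1 - w‖ + (1 - a) * ‖w‖ := by rw [← h1a, ← norm_mul]; exact norm_add_le _ _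
      _ ≤ ‖1 - w‖ + (1 - a) := by nlinarith
  have hnum : ‖1 - w‖ ≤ (1 - a) + ‖w - a‖ :=
    calc ‖1 - w‖ = ‖(1 - a) - (w - a)‖ := by ring_nf
      _ ≤ (1 - a) + ‖w - a‖ := h1a ▸ norm_sub_le _ _
  rw [div_mul_eq_mul_div, le_div_iff₀ (sub_pos.mpr hr₁)]
  nlinarith

theorem schwarz_transition_estimate_general (s t : ℝ) (hst : s ≤ t)
    (φ : ℂ → ℂ)
    (hφ : DifferentiableOn ℂ φ (ball (0 : ℂ) 1))
    (hφ0 : φ 0 = 0)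
    (hφle : ∀ z ∈ ball (0 : ℂ) 1, ‖φ z‖ ≤ ‖z‖)
    (hφ' : deriv φ 0 = (Real.exp (s - t) : ℂ)) :
    ∀ z ∈ ball (0 : ℂ) 1,
      ‖z - φ z‖ ≤ 2 * ‖z‖ * ((1 + ‖z‖) / (1 - ‖z‖)) * (1 - Real.exp (s - t)) := by
  intro z hz
  set a := Real.exp (s - t)
  have ha : a ≤ 1 := Real.exp_le_one_iff.mpr (sub_nonpos.mpr hst)
  have hz₁ : ‖z‖ < 1 := mem_ball_zero_iff.mp hz
  set h := dslope φ 0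
  have hφmaps : MapsTo φ (ball 0 1) (closedBall (φ 0) 1) := fun w hw => by
    rw [hφ0, mem_closedBall_zero_iff]
    exact (hφle w hw).trans (mem_ball_zero_iff.mp hw).le
  have hd : DifferentiableOn ℂ h (ball 0 1) :=
    (Complex.differentiableOn_dslope (ball_mem_nhds 0 one_pos)).mpr hφ
  have hmaps : MapsTo h (ball 0 1) (closedBall 0 1) := fun w hw => by
    simpa using Complex.norm_dslope_le_div_of_mapsTo_ball hφ hφmaps hw
  have hpick := norm_sub_apply_zero_le_of_mapsTo_ball hd hmaps hz
  rw [show h 0 = a by simp [h, hφ'], Complex.conj_ofReal] at hpick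
  have hfactor : z - φ z = z * (1 - h z) := by
    have := sub_smul_dslope φ 0 z
    rw [hφ0, sub_zero, sub_zero, smul_eq_mul] at this
    rw [← this]; ring
  calc ‖z - φ z‖ = ‖z‖ * ‖1 - h z‖ := by rw [hfactor, norm_mul]
    _ ≤ ‖z‖ * ((1 + ‖z‖) / (1 - ‖z‖) * (1 - a)) := by
      gcongr
      exact norm_one_sub_le_of_norm_sub_le (mem_closedBall_zero_iff.mp (hmaps hz)) ha
        (norm_nonneg z) hz₁ hpick
    _ ≤ 2 * ‖z‖ * ((1 + ‖z‖) / (1 - ‖z‖)) * (1 - a) := by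
      have : 0 ≤ ‖z‖ * ((1 + ‖z‖) / (1 - ‖z‖) * (1 - a)) := by
        have := sub_pos.mpr hz₁
        have := sub_nonneg.mpr ha
        positivity
      linarith

/-- For `0 ≤ s ≤ t` and a Schwarz function `φ` with `φ'(0) = e^{s-t}`,
`|z - φ z| ≤ 2|z| (1+|z|)/(1-|z|) (1 - e^{s-t})` on the unit disc. -/
theorem schwarz_transition_estimate (s t : ℝ) (hs : 0 ≤ s) (hst : s ≤ t)
    (φ : ℂ → ℂ)
    (hφ : DifferentiableOn ℂ φ (ball (0 : ℂ) 1))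
    (hφ0 : φ 0 = 0)
    (hφle : ∀ z ∈ ball (0 : ℂ) 1, ‖φ z‖ ≤ ‖z‖)
    (hφ' : deriv φ 0 = (Real.exp (s - t) : ℂ)) :
    ∀ z ∈ ball (0 : ℂ) 1,
      ‖z - φ z‖ ≤ 2 * ‖z‖ * ((1 + ‖z‖) / (1 - ‖z‖)) * (1 - Real.exp (s - t)) :=
  schwarz_transition_estimate_general s t hst φ hφ hφ0 hφle hφ'
end

section
/- Define the Legendre polynomials by Rodrigues' formula P_n(x) = (1/(2ⁿ·n!)) · dⁿ/dxⁿ[(x²−1)ⁿ]. Then for every real x with |x| ≤ 1 and every real t with |t| < 1, the series Σ_{n=0}^∞ P_n(x)·tⁿ converges and Σ_{n=0}^∞ P_n(x)·tⁿ = (1 − 2xt + t²)^{−1/2}. -/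
/-- The `n`-th Legendre polynomial, via Rodrigues' formula. -/
noncomputable def legendreP (n : ℕ) (x : ℝ) : ℝ :=
  (1 / ((2 : ℝ) ^ n * (n.factorial : ℝ))) *
    iteratedDeriv n (fun y : ℝ => (y ^ 2 - 1) ^ n) x

/-!
Expanding `(y² - 1)ⁿ` and differentiating turns Rodrigues' formula into
`Pₙ(x) = ∑ⱼ C(2(n-j), n-j)/4^(n-j) · C(n-j, j) · (2x)^(n-2j) · (-1)ʲ`, which is exactly the
coefficient of `tⁿ` obtained by substituting `w = 2xt - t²` into the binomial series
`(1 - w)^(-1/2) = ∑ₘ C(2m, m)/4ᵐ · wᵐ` and regrouping by powers of `t`. The regrouping is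
legitimate for small complex `t`, so `∑ Pₙ(x) tⁿ` is the Taylor series at `0` of
`F(t) = (1 - 2xt + t²)^(-1/2)`. For `|x| ≤ 1` we have `1 - 2xt + t² = (1 - αt)(1 - ᾱt)` with
`α = x + i√(1 - x²)` of modulus one; on the unit disc both factors have positive real part, so
their product avoids the branch cut `(-∞, 0]` and `F` is holomorphic there. Cauchy's theorem then
makes its Taylor series converge to `F` on the whole unit disc, in particular for real `|t| < 1`.
-/

open Finset FormalMultilinearSeries NNReal Metric Complex

theorem Nat.choose_mul_choose_two_mul {m j : ℕ} (hj : j ≤ m) :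
    (m + j).choose j * (2 * m).choose (m + j) = m.centralBinom * m.choose j := by
  have h := Nat.choose_mul (n := 2 * m) (k := m) (s := m - j) (by omega)
  rw [Nat.choose_symm hj, Nat.choose_symm_of_eq_add (by omega : 2 * m = (m - j) + (m + j)),
    show 2 * m - (m - j) = m + j by omega, show m - (m - j) = j by omega] at h
  rw [Nat.centralBinom_eq_two_mul_choose, h, mul_comm]

theorem ascPochhammer_eval_one_half {K : Type*} [Field K] [CharZero K] (m : ℕ) :
    (ascPochhammer K m).eval (1 / 2) = m.factorial * m.centralBinom / 4 ^ m := by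
  induction m with
  | zero => simp
  | succ m ih =>
    have h : ((m + 1 : ℕ) : K) * (m + 1).centralBinom = 2 * (2 * m + 1) * m.centralBinom := by
      exact_mod_cast Nat.succ_mul_centralBinom_succ m
    rw [ascPochhammer_succ_eval, ih, Nat.factorial_succ, Nat.cast_mul,
      mul_right_comm _ (m.factorial : K), h]
    field_simp
    ring

theorem Ring.multichoose_one_half {K : Type*} [Field K] [CharZero K] (m : ℕ) :
    Ring.multichoose (1 / 2 : K) m = m.centralBinom / 4 ^ m := by
  have h := Ring.factorial_nsmul_multichoose_eq_ascPochhammer (1 / 2 : K) m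
  rw [Polynomial.ascPochhammer_smeval_eq_eval, ascPochhammer_eval_one_half, nsmul_eq_mul,
    mul_div_assoc] at h
  exact mul_left_cancel₀ (Nat.cast_ne_zero.mpr m.factorial_ne_zero) h

theorem hasSum_centralBinom_div_four_pow_mul_pow {w : ℂ} (hw : ‖w‖ < 1) :
    HasSum (fun m => (m.centralBinom / 4 ^ m : ℂ) * w ^ m) ((1 - w) ^ (-(1 / 2) : ℂ)) := by
  have h := (one_div_one_sub_cpow_hasFPowerSeriesOnBall_zero (1 / 2)).hasSum_sub
    (y := w) (by simpa [← ofReal_norm] using hw)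
  simp only [ofScalars_apply_eq, sub_zero, smul_eq_mul, ← Ring.multichoose_eq,
    Ring.multichoose_one_half] at h
  rwa [cpow_neg, ← one_div]

theorem norm_centralBinom_div_four_pow_le_one (m : ℕ) :
    ‖(m.centralBinom / 4 ^ m : ℂ)‖ ≤ 1 := by
  rw [norm_div, norm_pow, norm_natCast, norm_ofNat, div_le_one (by positivity)]
  exact_mod_cast m.centralBinom_le_four_pow

theorem hasSum_add_pow {R : Type*} [CommSemiring R] [TopologicalSpace R] (y z : R) (m : ℕ) :
    HasSum (fun j => m.choose j * y ^ (m - j) * z ^ j) ((y + z) ^ m) := by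
  have hvanish : ∀ j ∉ range (m + 1), (m.choose j : R) * y ^ (m - j) * z ^ j = 0 := fun j hj => by
    simp [Nat.choose_eq_zero_of_lt (by simpa using hj : m < j)]
  convert hasSum_sum_of_ne_finset_zero (L := .unconditional ℕ) hvanish using 1
  rw [add_comm, add_pow]
  exact sum_congr rfl fun j _ => by ring

section Regrouping

variable {𝕜 : Type*} [NormedField 𝕜] [CompleteSpace 𝕜]

theorem hasSum_choose_mul_pow_mul_pow {a : ℕ → 𝕜} {y z : 𝕜}
    (ha : Summable fun m => ‖a m‖ * (‖y‖ + ‖z‖) ^ m) :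
    HasSum (fun p : ℕ × ℕ => a p.1 * ((p.1.choose p.2 : 𝕜) * y ^ (p.1 - p.2) * z ^ p.2))
      (∑' m, a m * (y + z) ^ m) := by
  have hrow_norm (m : ℕ) :
      HasSum (fun j => ‖a m‖ * ((m.choose j : ℝ) * ‖y‖ ^ (m - j) * ‖z‖ ^ j))
        (‖a m‖ * (‖y‖ + ‖z‖) ^ m) :=
    (hasSum_add_pow ‖y‖ ‖z‖ m).mul_left ‖a m‖
  have hsummable : Summable fun p : ℕ × ℕ =>
      a p.1 * ((p.1.choose p.2 : 𝕜) * y ^ (p.1 - p.2) * z ^ p.2) := by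
    refine Summable.of_norm_bounded (g := fun p : ℕ × ℕ =>
      ‖a p.1‖ * ((p.1.choose p.2 : ℝ) * ‖y‖ ^ (p.1 - p.2) * ‖z‖ ^ p.2)) ?_ fun p => ?_
    · rw [summable_prod_of_nonneg (fun p => by positivity)]
      exact ⟨fun m => (hrow_norm m).summable, by simpa only [(hrow_norm _).tsum_eq] using ha⟩
    · simp only [norm_mul, norm_pow]
      gcongr
      simpa using Nat.norm_cast_le (α := 𝕜) (p.1.choose p.2)
  rw [(hsummable.hasSum.prod_fiberwise fun m => (hasSum_add_pow y z m).mul_left (a m)).tsum_eq]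
  exact hsummable.hasSum

theorem hasSum_mul_add_mul_sq_pow {a : ℕ → 𝕜} {u v t : 𝕜}
    (ha : Summable fun m => ‖a m‖ * (‖u * t‖ + ‖v * t ^ 2‖) ^ m) :
    HasSum (fun n => (∑ j ∈ range (n + 1),
        a (n - j) * (n - j).choose j * u ^ (n - 2 * j) * v ^ j) * t ^ n)
      (∑' m, a m * (u * t + v * t ^ 2) ^ m) := by
  set h : ℕ × ℕ → 𝕜 := fun q =>
    a (q.1 - q.2) * (q.1 - q.2).choose q.2 * u ^ (q.1 - 2 * q.2) * v ^ q.2 * t ^ q.1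
  have hvanish {n j : ℕ} (hj : n < j) : h (n, j) = 0 := by
    simp [h, Nat.choose_eq_zero_of_lt (by omega : n - j < j)]
  -- `(m, j) ↦ (m + j, j)` sends the term `(ut)^(m-j) (vt²)^j` of `(ut + vt²)^m` to its `t`-degree.
  have hcomp : h ∘ (fun p : ℕ × ℕ => (p.1 + p.2, p.2)) =
      fun p => a p.1 * (p.1.choose p.2 * (u * t) ^ (p.1 - p.2) * (v * t ^ 2) ^ p.2) := by
    funext ⟨m, j⟩
    rcases le_or_gt j m with hjm | hjm
    · simp only [h, Function.comp_apply, Nat.add_sub_cancel]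
      rw [show m + j - 2 * j = m - j by omega, mul_pow, mul_pow, ← pow_mul,
        show m + j = (m - j) + 2 * j by omega, pow_add]
      ring
    · simp [h, Nat.choose_eq_zero_of_lt hjm]
  have hinj : Function.Injective fun p : ℕ × ℕ => (p.1 + p.2, p.2) := by
    rintro ⟨m, j⟩ ⟨m', j'⟩ hmj
    simp only [Prod.mk.injEq] at hmj ⊢
    omega
  have hh : HasSum h (∑' m, a m * (u * t + v * t ^ 2) ^ m) := by
    refine (hinj.hasSum_iff fun ⟨n, j⟩ hq => hvanish ?_).mp ?_
    · by_contra hjn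
      exact hq ⟨(n - j, j), by simp only [Prod.mk.injEq, and_true]; omega⟩
    · rw [hcomp]
      exact hasSum_choose_mul_pow_mul_pow ha
  refine hh.prod_fiberwise fun n => ?_
  rw [sum_mul]
  exact hasSum_sum_of_ne_finset_zero fun j hj => hvanish (by simpa using hj)

end Regrouping

theorem hasFPowerSeriesOnBall_ofScalars_of_hasSum {𝕜 : Type*} [RCLike 𝕜] {c : ℕ → 𝕜}
    {f : 𝕜 → 𝕜} {r : ℝ≥0} (hr : 0 < r)
    (h : ∀ t : 𝕜, ‖t‖ < r → HasSum (fun n => c n * t ^ n) (f t)) :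
    HasFPowerSeriesOnBall f (ofScalars 𝕜 c) 0 r where
  r_le := ENNReal.le_of_forall_nnreal_lt fun r' hr' => by
    refine (ofScalars 𝕜 c).le_radius_of_tendsto (l := 0) ?_
    have hr' : ‖((r' : ℝ) : 𝕜)‖ < r := by simpa using hr'
    simpa [ofScalars_norm] using (h _ hr').summable.tendsto_atTop_zero.norm
  r_pos := by simpa using hr
  hasSum {y} hy := by
    simpa [ofScalars_apply_eq, mul_comm] using h y (by simpa using hy)

theorem HasFPowerSeriesAt.hasSum_sub_of_differentiableOn {E : Type*} [NormedAddCommGroup E]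
    [NormedSpace ℂ E] [CompleteSpace E] {f : ℂ → E} {p : FormalMultilinearSeries ℂ ℂ E}
    {c z : ℂ} {r : ℝ} (hp : HasFPowerSeriesAt f p c) (hf : DifferentiableOn ℂ f (ball c r))
    (hz : z ∈ ball c r) : HasSum (fun n => p n fun _ => z - c) (f z) := by
  rw [mem_ball] at hz
  set R : ℝ≥0 := ⟨(dist z c + r) / 2, by linarith [dist_nonneg (x := z) (y := c)]⟩
  have hzR : dist z c < R := by change _ < (_ + _) / 2; linarith
  have hRr : (R : ℝ) < r := by change (_ + _) / 2 < _; linarith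
  have hR : HasFPowerSeriesOnBall f (cauchyPowerSeries f c R) c R :=
    (hf.mono (closedBall_subset_ball hRr)).hasFPowerSeriesOnBall (hzR.trans_le' dist_nonneg)
  rw [hR.hasFPowerSeriesAt.eq_formalMultilinearSeries hp] at hR
  exact hR.hasSum_sub (by simpa [edist_dist] using hzR)

theorem Complex.mul_mem_slitPlane_of_re_pos {w z : ℂ} (hw : 0 < w.re) (hz : 0 < z.re) :
    w * z ∈ slitPlane := by
  rw [mem_slitPlane_iff, mul_re, mul_im]
  by_contra! h
  -- the real part of `(w z) w̄ = |w|² z`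
  have key : w.re * (w.re * z.re - w.im * z.im) = z.re * (w.re ^ 2 + w.im ^ 2) := by
    linear_combination (-w.im) * h.2
  nlinarith [mul_pos hz (by positivity : 0 < w.re ^ 2 + w.im ^ 2),
    mul_le_mul_of_nonneg_left h.1 hw.le]

theorem one_sub_two_mul_add_sq_mem_slitPlane {x : ℝ} (hx : |x| ≤ 1) {t : ℂ} (ht : ‖t‖ < 1) :
    1 - 2 * x * t + t ^ 2 ∈ slitPlane := by
  set s := √(1 - x ^ 2)
  have hs : s ^ 2 = 1 - x ^ 2 := Real.sq_sqrt (by nlinarith [abs_le.mp hx])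
  have hre {α : ℂ} (hα : ‖α‖ = 1) : 0 < (1 - α * t).re := by
    have := re_le_norm (α * t)
    rw [norm_mul, hα, one_mul] at this
    rw [sub_re, one_re]
    linarith
  have hnorm (σ : ℝ) (hσ : σ ^ 2 = 1 - x ^ 2) : ‖(x + σ * I : ℂ)‖ = 1 := by
    rw [norm_add_mul_I, hσ, add_sub_cancel, Real.sqrt_one]
  have hfactor : 1 - 2 * x * t + t ^ 2 =
      (1 - (x + s * I) * t) * (1 - (x + (-s : ℝ) * I) * t) := by
    have hs' : (s : ℂ) ^ 2 = 1 - x ^ 2 := by exact_mod_cast hs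
    push_cast
    linear_combination (-(t ^ 2)) * hs' + t ^ 2 * s ^ 2 * I_sq
  rw [hfactor]
  exact mul_mem_slitPlane_of_re_pos (hre (hnorm s hs)) (hre (hnorm (-s) (by rw [neg_sq, hs])))

theorem differentiableOn_one_sub_two_mul_add_sq_cpow {x : ℝ} (hx : |x| ≤ 1) (a : ℂ) :
    DifferentiableOn ℂ (fun t : ℂ => (1 - 2 * x * t + t ^ 2) ^ a) (ball 0 1) := by
  intro t ht
  have hmem := one_sub_two_mul_add_sq_mem_slitPlane hx (t := t) (by simpa using ht)
  have hd : DifferentiableAt ℂ (fun t : ℂ => 1 - 2 * x * t + t ^ 2) t := by fun_prop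
  exact (hd.cpow_const hmem).differentiableWithinAt

theorem iteratedDeriv_sq_sub_one_pow (n : ℕ) (x : ℝ) :
    iteratedDeriv n (fun y : ℝ => (y ^ 2 - 1) ^ n) x =
      ∑ j ∈ range (n + 1), (-1 : ℝ) ^ j * n.choose j * (2 * (n - j)).descFactorial n *
        x ^ (2 * (n - j) - n) := by
  have hexpand : (fun y : ℝ => (y ^ 2 - 1) ^ n) =
      fun y => ∑ j ∈ range (n + 1), ((-1 : ℝ) ^ j * n.choose j) * y ^ (2 * (n - j)) := by
    funext y
    rw [sub_eq_neg_add, add_pow]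
    refine sum_congr rfl fun j _ => ?_
    rw [← pow_mul]
    ring
  rw [hexpand, iteratedDeriv_fun_sum (fun j _ => by fun_prop)]
  refine sum_congr rfl fun j _ => ?_
  rw [iteratedDeriv_const_mul_field, iteratedDeriv_pow]
  ring

theorem legendreP_eq_sum (n : ℕ) (x : ℝ) :
    legendreP n x = ∑ j ∈ range (n + 1),
      ((n - j).centralBinom / 4 ^ (n - j) : ℝ) * (n - j).choose j * (2 * x) ^ (n - 2 * j) *
        (-1) ^ j := by
  rw [legendreP, iteratedDeriv_sq_sub_one_pow, mul_sum]
  refine sum_congr rfl fun j hj => ?_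
  rcases le_or_gt (2 * j) n with hjn | hjn
  · obtain ⟨m, rfl⟩ : ∃ m, n = m + j := ⟨n - j, by omega⟩
    have hcomb : ((m + j).choose j : ℝ) * (2 * m).descFactorial (m + j) =
        (m + j).factorial * (m.centralBinom * m.choose j) := by
      norm_cast
      rw [Nat.descFactorial_eq_factorial_mul_choose, mul_left_comm,
        Nat.choose_mul_choose_two_mul (by omega)]
    have h4 : (4 : ℝ) ^ m = 2 ^ (m + j) * 2 ^ (m - j) := by
      rw [← pow_add, show (4 : ℝ) = 2 ^ 2 by norm_num, ← pow_mul]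
      congr 1
      omega
    rw [Nat.add_sub_cancel, show 2 * m - (m + j) = m - j by omega,
      show m + j - 2 * j = m - j by omega, h4, mul_pow]
    field_simp
    linear_combination x ^ (m - j) * hcomb
  · have hj := mem_range.mp hj
    have h1 : (2 * (n - j)).descFactorial n = 0 :=
      Nat.descFactorial_eq_zero_iff_lt.mpr (by omega)
    have h2 : (n - j).choose j = 0 := Nat.choose_eq_zero_of_lt (by omega)
    simp [h1, h2]

theorem hasSum_legendreP_mul_pow_of_norm_lt {x : ℝ} {t : ℂ}
    (ht : 2 * |x| * ‖t‖ + ‖t‖ ^ 2 < 1) :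
    HasSum (fun n => (legendreP n x : ℂ) * t ^ n) ((1 - 2 * x * t + t ^ 2) ^ (-(1 / 2) : ℂ)) := by
  have hr : ‖(2 * x : ℂ) * t‖ + ‖(-1 : ℂ) * t ^ 2‖ = 2 * |x| * ‖t‖ + ‖t‖ ^ 2 := by
    simp [norm_real]
  have ha : Summable fun m => ‖(m.centralBinom / 4 ^ m : ℂ)‖ *
      (‖(2 * x : ℂ) * t‖ + ‖(-1 : ℂ) * t ^ 2‖) ^ m :=
    .of_nonneg_of_le (fun m => by positivity)
      (fun m => mul_le_of_le_one_left (by positivity) (norm_centralBinom_div_four_pow_le_one m))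
      (summable_geometric_of_lt_one (by positivity) (hr ▸ ht))
  have hw : ‖(2 * x : ℂ) * t + (-1) * t ^ 2‖ < 1 := (norm_add_le _ _).trans_lt (hr ▸ ht)
  have hsum := hasSum_mul_add_mul_sq_pow ha
  rw [(hasSum_centralBinom_div_four_pow_mul_pow hw).tsum_eq,
    show 1 - ((2 * x : ℂ) * t + (-1) * t ^ 2) = 1 - 2 * x * t + t ^ 2 by ring] at hsum
  have hcoeff (n : ℕ) : (legendreP n x : ℂ) = ∑ j ∈ range (n + 1),
      ((n - j).centralBinom / 4 ^ (n - j) : ℂ) * (n - j).choose j * (2 * x) ^ (n - 2 * j) *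
        (-1) ^ j := by
    rw [legendreP_eq_sum]
    push_cast
    rfl
  simpa only [hcoeff] using hsum

theorem hasFPowerSeriesAt_legendreP {x : ℝ} (hx : |x| ≤ 1) :
    HasFPowerSeriesAt (fun t : ℂ => (1 - 2 * x * t + t ^ 2) ^ (-(1 / 2) : ℂ))
      (ofScalars ℂ fun n => (legendreP n x : ℂ)) 0 := by
  refine (hasFPowerSeriesOnBall_ofScalars_of_hasSum (r := 1 / 3) (by norm_num)
    fun t ht => hasSum_legendreP_mul_pow_of_norm_lt ?_).hasFPowerSeriesAt
  have ht' : ‖t‖ < 1 / 3 := by simpa using ht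
  nlinarith [abs_nonneg x, norm_nonneg t]

/-- **Generating function of the Legendre polynomials.** For `|x| ≤ 1` and `|t| < 1`,
`∑ₙ Pₙ(x) tⁿ` converges to `(1 - 2xt + t²)^{-1/2}`. -/
theorem legendre_generating_function (x t : ℝ) (hx : |x| ≤ 1) (ht : |t| < 1) :
    HasSum (fun n : ℕ => legendreP n x * t ^ n)
      ((1 - 2 * x * t + t ^ 2) ^ (-(1 / 2) : ℝ)) := by
  have hC := (hasFPowerSeriesAt_legendreP hx).hasSum_sub_of_differentiableOn
    (differentiableOn_one_sub_two_mul_add_sq_cpow hx _) (z := t) (by simpa using ht)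
  have hbase : 0 ≤ 1 - 2 * x * t + t ^ 2 := by nlinarith [sq_nonneg (t - x), abs_le.mp hx]
  rw [← Complex.hasSum_ofReal]
  push_cast [Complex.ofReal_cpow hbase]
  simpa [ofScalars_apply_eq, mul_comm] using hC
end
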